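/- arXiv:1211.4816 — 3 statements merged into one kernel-verified Lean document; each statement's English description precedes it below -/
import Mathlib

section
/- Suppose Σ_{n≥1} |ρ(n)| < ∞ and set Δ_N = Σ_{k=1}^{N} Σ_{i≥k} |ρ(i)| for N ≥ 1. Then for all β ≥ 0, h ∈ ℝ and all integers n, m ≥ 1, one has Z_{n+m}(β,h) ≥ Z_n(β,h) · Z_m(β,h) · exp(−β² Δ_{n+m}). -/
open Real Filter Finset

noncomputable def annWeight (K ρ : ℕ → ℝ) (β h : ℝ) {m : ℕ} (c : Composition m) : ℝ :=
  Real.exp ((c.length : ℝ) * (h + β ^ 2 / 2)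
      + β ^ 2 * ∑ i : Fin c.length, ∑ j : Fin c.length,
          if (i : ℕ) < (j : ℕ) then
            ρ (c.sizeUpTo ((j : ℕ) + 1) - c.sizeUpTo ((i : ℕ) + 1)) else 0)
    * ∏ i : Fin c.length, K (c.blocksFun i)

/-- The annealed partition function `Z_n(β,h)`: the sum over `k ≥ 1` and tuples
`(l_1,…,l_k)` of positive integers with `l_1+⋯+l_k = n` (i.e. compositions of `n`) of
`exp(k(h+β²/2) + β² Σ_{1≤i<j≤k} ρ(τ_j − τ_i)) ∏ K(l_i)`, where `τ_i = l_1+⋯+l_i`. -/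
noncomputable def Zann (K ρ : ℕ → ℝ) (β h : ℝ) (n : ℕ) : ℝ :=
  ∑ c : Composition n, annWeight K ρ β h c

/-!
Concatenating a composition of `n` with one of `m` gives a composition of `n + m` whose weight
is the product of the two weights times `exp (β ^ 2 * C)`, where `C` collects the correlations
between the renewal points of the first composition and those of the second, shifted by `n`.
A point `τ ≤ n` of the first meets the points of the second at pairwise distinct distances
`> n - τ`, so `|C| ≤ Σ_{k ≤ n} Σ_{i ≥ k} |ρ i| ≤ Δ_{n+m}`. Concatenation is injective and all
weights are nonnegative, so `Z_n Z_m exp (-β ^ 2 Δ_{n+m})` is bounded by part of `Z_{n+m}`.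
-/

theorem Finset.sum_comp_le_sum_of_injOn {ι κ M : Type*} [AddCommMonoid M] [PartialOrder M]
    [IsOrderedAddMonoid M] {s : Finset ι} {t : Finset κ} {g : ι → κ} (hg : Set.InjOn g s)
    (hst : ∀ i ∈ s, g i ∈ t) {f : κ → M} (hf : ∀ k ∈ t, 0 ≤ f k) :
    ∑ i ∈ s, f (g i) ≤ ∑ k ∈ t, f k := by
  classical
  rw [← sum_image hg]
  exact sum_le_sum_of_subset_of_nonneg (by simpa [image_subset_iff] using hst)
    fun k hk _ => hf k hk

theorem Summable.sum_comp_le_tsum_of_injOn {ι κ : Type*} {f : κ → ℝ} (hf : Summable f)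
    (hf0 : ∀ k, 0 ≤ f k) {s : Finset ι} {g : ι → κ} (hg : Set.InjOn g s) :
    ∑ i ∈ s, f (g i) ≤ ∑' k, f k := by
  classical
  rw [← sum_image hg]
  exact hf.sum_le_tsum _ fun k _ => hf0 k

theorem Finset.sum_pairs_lt_range_add {M : Type*} [AddCommMonoid M] (g : ℕ → ℕ → M)
    (a b : ℕ) :
    ∑ i ∈ range (a + b), ∑ j ∈ range (a + b), (if i < j then g i j else 0)
      = ∑ i ∈ range a, ∑ j ∈ range a, (if i < j then g i j else 0)
        + ∑ i ∈ range b, ∑ j ∈ range b, (if i < j then g (a + i) (a + j) else 0)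
        + ∑ i ∈ range a, ∑ j ∈ range b, g i (a + j) := by
  have hlow : ∑ i ∈ range b, ∑ j ∈ range a, (if a + i < j then g (a + i) j else 0) = 0 :=
    sum_eq_zero fun i _ => sum_eq_zero fun j hj => if_neg (by simp at hj; omega)
  have hcross : ∀ i ∈ range a, ∀ j ∈ range b, (if i < a + j then g i (a + j) else 0) = g i (a + j) :=
    fun i hi j _ => if_pos (by simp at hi; omega)
  simp only [sum_range_add, sum_add_distrib, hlow, add_lt_add_iff_left, add_zero]
  rw [sum_congr rfl fun i hi => sum_congr rfl (hcross i hi)]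
  abel

namespace Composition

variable {n m : ℕ}

theorem length_append (c : Composition n) (d : Composition m) :
    (c.append d).length = c.length + d.length :=
  List.length_append

theorem sizeUpTo_append_of_le (c : Composition n) (d : Composition m) {i : ℕ}
    (hi : i ≤ c.length) : (c.append d).sizeUpTo i = c.sizeUpTo i := by
  simp [sizeUpTo, List.take_append, Nat.sub_eq_zero_of_le hi]

theorem sizeUpTo_append_length_add (c : Composition n) (d : Composition m) (i : ℕ) :
    (c.append d).sizeUpTo (c.length + i) = n + d.sizeUpTo i := by
  simp [sizeUpTo, List.take_length_add_append, c.blocks_sum]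

theorem eq_nil_of_blocks_eq_append {c c' : Composition n} {r : List ℕ}
    (h : c'.blocks = c.blocks ++ r) : r = [] := by
  have hsum : r.sum = 0 := by
    have := congrArg List.sum h
    simp only [blocks_sum, List.sum_append] at this
    omega
  refine List.eq_nil_iff_forall_not_mem.2 fun x hx => ?_
  have : 0 < x := c'.blocks_pos (h ▸ List.mem_append_right _ hx)
  exact this.ne' (List.sum_eq_zero_iff.1 hsum x hx)

theorem append_injective :
    Function.Injective fun p : Composition n × Composition m => p.1.append p.2 := by
  rintro ⟨c, d⟩ ⟨c', d'⟩ h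
  have hb : c.blocks ++ d.blocks = c'.blocks ++ d'.blocks := congrArg blocks h
  rcases List.append_eq_append_iff.1 hb with ⟨r, hc, hd⟩ | ⟨r, hc, hd⟩
  · obtain rfl := eq_nil_of_blocks_eq_append hc
    simp only [List.append_nil, List.nil_append] at hc hd
    exact Prod.ext (Composition.ext hc.symm) (Composition.ext hd)
  · obtain rfl := eq_nil_of_blocks_eq_append hc
    simp only [List.append_nil, List.nil_append] at hc hd
    exact Prod.ext (Composition.ext hc) (Composition.ext hd.symm)

theorem sizeUpTo_strictMonoOn (c : Composition n) : StrictMonoOn c.sizeUpTo (Set.Iic c.length) :=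
  strictMonoOn_Iic_of_lt_succ fun _ hi => c.sizeUpTo_strict_mono hi

theorem sizeUpTo_succ_injOn (c : Composition n) :
    Set.InjOn (fun i => c.sizeUpTo (i + 1)) (range c.length) := fun i hi j hj hij =>
  Nat.succ_injective <| c.sizeUpTo_strictMonoOn.injOn
    (by simp at hi ⊢; omega) (by simp at hj ⊢; omega) hij

theorem one_le_sizeUpTo_succ (c : Composition n) {i : ℕ} (hi : i < c.length) :
    1 ≤ c.sizeUpTo (i + 1) :=
  (Nat.zero_le _).trans_lt (c.sizeUpTo_strict_mono hi)

noncomputable def interaction (ρ : ℕ → ℝ) (c : Composition n) : ℝ :=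
  ∑ i ∈ range c.length, ∑ j ∈ range c.length,
    if i < j then ρ (c.sizeUpTo (j + 1) - c.sizeUpTo (i + 1)) else 0

/-- `n - τ_i + τ'_j` is the distance from the `i`-th renewal point `τ_i ≤ n` of `c` to the `j`-th
renewal point of `d` shifted by `n`; the truncated subtraction is exact. -/
noncomputable def crossInteraction (ρ : ℕ → ℝ) (c : Composition n) (d : Composition m) : ℝ :=
  ∑ i ∈ range c.length, ∑ j ∈ range d.length, ρ (n - c.sizeUpTo (i + 1) + d.sizeUpTo (j + 1))

theorem interaction_append (ρ : ℕ → ℝ) (c : Composition n) (d : Composition m) :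
    (c.append d).interaction ρ = c.interaction ρ + d.interaction ρ + c.crossInteraction ρ d := by
  have hleft : ∀ i ∈ range c.length, (c.append d).sizeUpTo (i + 1) = c.sizeUpTo (i + 1) :=
    fun i hi => c.sizeUpTo_append_of_le d (by simp at hi; omega)
  have hright : ∀ i, (c.append d).sizeUpTo (c.length + i + 1) = n + d.sizeUpTo (i + 1) :=
    fun i => c.sizeUpTo_append_length_add d (i + 1)
  rw [interaction, length_append, sum_pairs_lt_range_add]
  simp only [hright, Nat.add_sub_add_left]
  congr 1
  · congr 1
    exact sum_congr rfl fun i hi => sum_congr rfl fun j hj => by rw [hleft i hi, hleft j hj]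
  · exact sum_congr rfl fun i hi => sum_congr rfl fun j _ => by
      rw [hleft i hi, Nat.sub_add_comm (c.sizeUpTo_le _)]

theorem abs_crossInteraction_le {ρ : ℕ → ℝ} (hρ : Summable fun k => |ρ (k + 1)|)
    (c : Composition n) (d : Composition m) :
    |c.crossInteraction ρ d| ≤ ∑ k ∈ Icc 1 n, ∑' i, |ρ (k + i)| := by
  have hsumm (a : ℕ) : Summable fun t => |ρ (a + 1 + t)| :=
    ((summable_nat_add_iff a).2 hρ).congr fun t => by congr 2; omega
  have hinner (a : ℕ) :
      ∑ j ∈ range d.length, |ρ (a + d.sizeUpTo (j + 1))| ≤ ∑' t, |ρ (a + 1 + t)| := by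
    have hshift : ∀ j ∈ range d.length,
        |ρ (a + d.sizeUpTo (j + 1))| = |ρ (a + 1 + (d.sizeUpTo (j + 1) - 1))| := fun j hj => by
      have := d.one_le_sizeUpTo_succ (mem_range.1 hj)
      congr 2; omega
    rw [sum_congr rfl hshift]
    refine (hsumm a).sum_comp_le_tsum_of_injOn (fun _ => abs_nonneg _) fun i hi j hj hij => ?_
    have := d.one_le_sizeUpTo_succ (mem_range.1 hi)
    have := d.one_le_sizeUpTo_succ (mem_range.1 hj)
    exact d.sizeUpTo_succ_injOn hi hj (by beta_reduce at hij ⊢; omega)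
  calc |c.crossInteraction ρ d|
      ≤ ∑ i ∈ range c.length, ∑ j ∈ range d.length,
          |ρ (n - c.sizeUpTo (i + 1) + d.sizeUpTo (j + 1))| :=
        (abs_sum_le_sum_abs _ _).trans (sum_le_sum fun _ _ => abs_sum_le_sum_abs _ _)
    _ ≤ ∑ i ∈ range c.length, ∑' t, |ρ (n - c.sizeUpTo (i + 1) + 1 + t)| :=
        sum_le_sum fun _ _ => hinner _
    _ ≤ ∑ k ∈ Icc 1 n, ∑' t, |ρ (k + t)| := by
        refine sum_comp_le_sum_of_injOn (g := fun i => n - c.sizeUpTo (i + 1) + 1)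
          (f := fun k => ∑' t, |ρ (k + t)|) (fun i hi j hj hij => ?_) (fun i hi => ?_)
          (fun _ _ => tsum_nonneg fun _ => abs_nonneg _)
        · have := c.sizeUpTo_le (i + 1)
          have := c.sizeUpTo_le (j + 1)
          exact c.sizeUpTo_succ_injOn hi hj (by beta_reduce at hij ⊢; omega)
        · have := c.one_le_sizeUpTo_succ (mem_range.1 hi)
          have := c.sizeUpTo_le (i + 1)
          rw [mem_Icc]
          omega

end Composition

section Weights

variable (K ρ : ℕ → ℝ) (β h : ℝ) {n m : ℕ}

theorem annWeight_eq_exp_mul_prod (c : Composition n) :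
    annWeight K ρ β h c
      = exp (c.length * (h + β ^ 2 / 2) + β ^ 2 * c.interaction ρ) * (c.blocks.map K).prod := by
  simp only [annWeight, Composition.interaction, ← Fin.prod_univ_fun_getElem, Finset.sum_range]
  rfl

theorem annWeight_append (c : Composition n) (d : Composition m) :
    annWeight K ρ β h (c.append d)
      = annWeight K ρ β h c * annWeight K ρ β h d * exp (β ^ 2 * c.crossInteraction ρ d) := by
  simp only [annWeight_eq_exp_mul_prod, Composition.interaction_append,
    Composition.length_append, Composition.append_blocks, List.map_append, List.prod_append]
  rw [show ((c.length + d.length : ℕ) : ℝ) * (h + β ^ 2 / 2)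
        + β ^ 2 * (c.interaction ρ + d.interaction ρ + c.crossInteraction ρ d)
      = (c.length * (h + β ^ 2 / 2) + β ^ 2 * c.interaction ρ)
        + (d.length * (h + β ^ 2 / 2) + β ^ 2 * d.interaction ρ)
        + β ^ 2 * c.crossInteraction ρ d by push_cast; ring, exp_add, exp_add]
  ring

variable {K} in
theorem annWeight_nonneg (hK : ∀ k, 1 ≤ k → 0 ≤ K k) (c : Composition n) :
    0 ≤ annWeight K ρ β h c := by
  rw [annWeight_eq_exp_mul_prod]
  refine mul_nonneg (exp_pos _).le (List.prod_nonneg fun x hx => ?_)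
  obtain ⟨k, hk, rfl⟩ := List.mem_map.1 hx
  exact hK k (c.one_le_blocks hk)

end Weights

theorem annealed_partition_supermultiplicative_general (K ρ : ℕ → ℝ)
    (hKpos : ∀ n : ℕ, 1 ≤ n → 0 < K n)
    (hρ : Summable fun n : ℕ => |ρ (n + 1)|) :
    ∀ β h : ℝ, 0 ≤ β → ∀ n m : ℕ, 1 ≤ n → 1 ≤ m →
      Zann K ρ β h n * Zann K ρ β h m *
          Real.exp (-β ^ 2 * ∑ k ∈ Finset.Icc 1 (n + m), ∑' i : ℕ, |ρ (k + i)|)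
        ≤ Zann K ρ β h (n + m) := by
  intro β h _ n m _ _
  set Δ := ∑ k ∈ Icc 1 (n + m), ∑' i : ℕ, |ρ (k + i)|
  have hK : ∀ k, 1 ≤ k → 0 ≤ K k := fun k hk => (hKpos k hk).le
  have hcross (c : Composition n) (d : Composition m) : -Δ ≤ c.crossInteraction ρ d :=
    neg_le_of_abs_le <| (c.abs_crossInteraction_le hρ d).trans <|
      sum_le_sum_of_subset_of_nonneg (Icc_subset_Icc_right (by omega))
        fun _ _ _ => tsum_nonneg fun _ => abs_nonneg _
  calc Zann K ρ β h n * Zann K ρ β h m * exp (-β ^ 2 * Δ)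
      = ∑ p : Composition n × Composition m,
          annWeight K ρ β h p.1 * annWeight K ρ β h p.2 * exp (-β ^ 2 * Δ) := by
        rw [Zann, Zann, sum_mul_sum, ← sum_product', sum_mul]
        rfl
    _ ≤ ∑ p : Composition n × Composition m, annWeight K ρ β h (p.1.append p.2) :=
        sum_le_sum fun p _ => by
          rw [annWeight_append]
          refine mul_le_mul_of_nonneg_left (exp_le_exp.2 ?_)
            (mul_nonneg (annWeight_nonneg ρ β h hK _) (annWeight_nonneg ρ β h hK _))
          rw [neg_mul, ← mul_neg]
          exact mul_le_mul_of_nonneg_left (hcross p.1 p.2) (sq_nonneg β)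
    _ ≤ Zann K ρ β h (n + m) :=
        sum_comp_le_sum_of_injOn Composition.append_injective.injOn (fun _ _ => mem_univ _)
          fun _ _ => annWeight_nonneg ρ β h hK _

/-- With `Δ_N = Σ_{k=1}^{N} Σ_{i≥k} |ρ(i)|`, the annealed partition functions satisfy the
approximate supermultiplicativity `Z_{n+m} ≥ Z_n Z_m exp(−β² Δ_{n+m})`. -/
theorem annealed_partition_supermultiplicative (K ρ : ℕ → ℝ)
    (hKpos : ∀ n : ℕ, 1 ≤ n → 0 < K n)
    (hKsum : HasSum (fun n : ℕ => K (n + 1)) 1)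
    (hρ : Summable fun n : ℕ => |ρ (n + 1)|) :
    ∀ β h : ℝ, 0 ≤ β → ∀ n m : ℕ, 1 ≤ n → 1 ≤ m →
      Zann K ρ β h n * Zann K ρ β h m *
          Real.exp (-β ^ 2 * ∑ k ∈ Finset.Icc 1 (n + m), ∑' i : ℕ, |ρ (k + i)|)
        ≤ Zann K ρ β h (n + m) :=
  annealed_partition_supermultiplicative_general K ρ hKpos hρ
end

section
/- Let φ : Σ → ℝ be a potential with Σ_{n≥1} V_n(φ) < ∞ and sup_{x∈Σ} Σ_{s≥1} e^{φ(sx)} < ∞, and let P_G(φ) be its Gurevich pressure. Let (f_n)_{n≥1} be a sequence of functions f_n : Σ → ℝ for which there exist constants 0 < c ≤ C < ∞ with c ≤ f_n(y) ≤ C for all n ≥ 1 and y ∈ Σ. Then for every x ∈ Σ, (1/n) log (L_φ^n f_n)(x) → P_G(φ) as n → ∞. In particular, taking f_n ≡ 1, P_G(φ) = lim_{n→∞} (1/n) log (L_φ^n 1)(x) for every x ∈ Σ. -/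
open Real Filter Finset

/-- The space `Σ = (ℤ≥1)^ℕ` of sequences of positive integers. -/
abbrev SSeq : Type := ℕ → ℕ+

/-- The left shift `T` on `Σ`. -/
def shift (x : SSeq) : SSeq := fun i => x (i + 1)

/-- Concatenation `sx = (s, x_0, x_1, …)`. -/
def consSeq (s : ℕ+) (x : SSeq) : SSeq := fun i => match i with
  | 0 => s
  | j + 1 => x j

/-- The Birkhoff sum `φ_n = Σ_{k=0}^{n−1} φ∘T^k`. -/
noncomputable def birkhoff (φ : SSeq → ℝ) (n : ℕ) (x : SSeq) : ℝ :=
  ∑ k ∈ Finset.range n, φ (shift^[k] x)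

/-- The set of variations `{|φ(x) − φ(y)| : x_i = y_i for all i < n}`. -/
def varSet (φ : SSeq → ℝ) (n : ℕ) : Set ℝ :=
  {d | ∃ x y : SSeq, (∀ i < n, x i = y i) ∧ d = |φ x - φ y|}

/-- The `n`-th variation `V_n(φ)`. -/
noncomputable def Vn (φ : SSeq → ℝ) (n : ℕ) : ℝ := sSup (varSet φ n)

open scoped ENNReal in
/-- `Z_n(φ,a) = Σ_{x : T^n x = x, x_0 = a} e^{φ_n(x)}`, valued in `[0,∞]`. -/
noncomputable def Zg (φ : SSeq → ℝ) (a : ℕ+) (n : ℕ) : ℝ≥0∞ :=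
  ∑' x : {x : SSeq // shift^[n] x = x ∧ x 0 = a}, ENNReal.ofReal (Real.exp (birkhoff φ n x))

/-- `P` is the Gurevich pressure of `φ`: for every `a`,
`(1/n) log Z_n(φ,a) → P`. -/
def IsGurevich (φ : SSeq → ℝ) (P : ℝ) : Prop :=
  ∀ a : ℕ+, Tendsto (fun n : ℕ => (1 / (n : ℝ)) * Real.log (Zg φ a n).toReal) atTop (nhds P)

open scoped ENNReal in
/-- `sup_{x∈Σ} Σ_{s≥1} e^{φ(sx)}`, valued in `[0,∞]`. -/
noncomputable def opNorm (φ : SSeq → ℝ) : ℝ≥0∞ :=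
  ⨆ x : SSeq, ∑' s : ℕ+, ENNReal.ofReal (Real.exp (φ (consSeq s x)))

/-- The transfer (Ruelle–Perron–Frobenius) operator `(L_φ f)(x) = Σ_{s≥1} e^{φ(sx)} f(sx)`. -/
noncomputable def Lop (φ : SSeq → ℝ) (f : SSeq → ℝ) : SSeq → ℝ :=
  fun x => ∑' s : ℕ+, Real.exp (φ (consSeq s x)) * f (consSeq s x)

/-!
Expanding `(L_φ^n f)(x) = Σ_{|w| = n} e^{φ_n(wx)} f(wx)` over words `w`, the bounds `c ≤ f_n ≤ C`
reduce everything to `f ≡ 1`. Summable variations give bounded distortion: Birkhoff sums of two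
points sharing their first `n` letters differ by at most `B = Σ_{k≥1} V_k(φ)`. Cutting a periodic
point of period `n + 1` to its first period, and conversely extending the word `1w` periodically,
gives `e^{-B} Z_{n+1}(φ,1) ≤ (L_φ^{n+1} 1)(x)` and `(L_φ^n 1)(x) ≤ e^{2B - φ(1x)} Z_{n+1}(φ,1)`,
which squeeze `(1/n) log (L_φ^n 1)(x)` to the Gurevich pressure.
-/

open scoped ENNReal

lemma shift_iterate_apply (x : SSeq) (k i : ℕ) : shift^[k] x i = x (i + k) := by
  induction k generalizing x with
  | zero => rfl
  | succ k ih => rw [Function.iterate_succ_apply, ih]; simp only [shift]; ring_nf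

@[simp]
lemma shift_consSeq (s : ℕ+) (x : SSeq) : shift (consSeq s x) = x := rfl

lemma birkhoff_succ (φ : SSeq → ℝ) (n : ℕ) (x : SSeq) :
    birkhoff φ (n + 1) x = φ x + birkhoff φ n (shift x) := by
  simp only [birkhoff, Finset.sum_range_succ', Function.iterate_succ_apply, Function.iterate_zero,
    id, add_comm]

@[simp]
lemma birkhoff_one (φ : SSeq → ℝ) (x : SSeq) : birkhoff φ 1 x = φ x := by
  simp [birkhoff]

lemma Vn_nonneg {φ : SSeq → ℝ} {n : ℕ} (h : BddAbove (varSet φ n)) : 0 ≤ Vn φ n :=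
  le_csSup h ⟨fun _ => 1, fun _ => 1, fun _ _ => rfl, by simp⟩

lemma abs_sub_le_Vn {φ : SSeq → ℝ} {n : ℕ} (h : BddAbove (varSet φ n)) {x y : SSeq}
    (hxy : ∀ i < n, x i = y i) : |φ x - φ y| ≤ Vn φ n :=
  le_csSup h ⟨x, y, hxy, rfl⟩

noncomputable def varSum (φ : SSeq → ℝ) : ℝ := ∑' n : ℕ, Vn φ (n + 1)

section Distortion

variable {φ : SSeq → ℝ} (hbdd : ∀ n : ℕ, 1 ≤ n → BddAbove (varSet φ n))
  (hsum : Summable fun n : ℕ => Vn φ (n + 1))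
include hbdd hsum

/-- Bounded distortion: the `k`-th term is controlled by `V_{n-k}`, and these add up to at most
`varSum φ`. -/
lemma birkhoff_sub_le_varSum {n : ℕ} {x y : SSeq} (hxy : ∀ i < n, x i = y i) :
    birkhoff φ n x - birkhoff φ n y ≤ varSum φ := by
  have hterm : ∀ k ∈ range n, φ (shift^[k] x) - φ (shift^[k] y) ≤ Vn φ (n - 1 - k + 1) := by
    intro k hk
    have hk := mem_range.mp hk
    refine (le_abs_self _).trans (abs_sub_le_Vn (hbdd _ (by omega)) fun i hi => ?_)
    rw [shift_iterate_apply, shift_iterate_apply]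
    exact hxy _ (by omega)
  calc birkhoff φ n x - birkhoff φ n y
      = ∑ k ∈ range n, (φ (shift^[k] x) - φ (shift^[k] y)) := by
        rw [birkhoff, birkhoff, sum_sub_distrib]
    _ ≤ ∑ k ∈ range n, Vn φ (n - 1 - k + 1) := sum_le_sum hterm
    _ = ∑ k ∈ range n, Vn φ (k + 1) := sum_range_reflect (fun k => Vn φ (k + 1)) n
    _ ≤ varSum φ := hsum.sum_le_tsum _ fun k _ => Vn_nonneg (hbdd _ (by omega))

end Distortion

def prependWord {n : ℕ} (w : Fin n → ℕ+) (x : SSeq) : SSeq :=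
  fun i => if h : i < n then w ⟨i, h⟩ else x (i - n)

lemma prependWord_of_lt {n : ℕ} (w : Fin n → ℕ+) (x : SSeq) {i : ℕ} (h : i < n) :
    prependWord w x i = w ⟨i, h⟩ := dif_pos h

@[simp]
lemma prependWord_elim0 (w : Fin 0 → ℕ+) (x : SSeq) : prependWord w x = x := by
  funext i; simp [prependWord]

lemma consSeq_prependWord {n : ℕ} (s : ℕ+) (w : Fin n → ℕ+) (x : SSeq) :
    consSeq s (prependWord w x) = prependWord (Fin.cons s w) x := by
  funext i
  rcases i with _ | j
  · rfl
  · by_cases h : j < n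
    · simp [consSeq, prependWord, h, Fin.cons]
    · simp [consSeq, prependWord, h]

def periodicSeq {n : ℕ} (w : Fin (n + 1) → ℕ+) : SSeq :=
  fun i => w ⟨i % (n + 1), Nat.mod_lt _ n.succ_pos⟩

lemma periodicSeq_of_lt {n : ℕ} (w : Fin (n + 1) → ℕ+) {i : ℕ} (h : i < n + 1) :
    periodicSeq w i = w ⟨i, h⟩ := by
  simp [periodicSeq, Nat.mod_eq_of_lt h]

lemma shift_iterate_periodicSeq {n : ℕ} (w : Fin (n + 1) → ℕ+) :
    shift^[n + 1] (periodicSeq w) = periodicSeq w := by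
  funext i
  simp [shift_iterate_apply, periodicSeq]

lemma periodicSeq_injective {n : ℕ} : Function.Injective (periodicSeq (n := n)) := by
  intro w w' h
  funext j
  simpa [periodicSeq_of_lt _ j.isLt] using congrFun h j

lemma periodicSeq_restrict {n : ℕ} {x : SSeq} (hx : shift^[n + 1] x = x) :
    periodicSeq (fun j : Fin (n + 1) => x j) = x := by
  have hper : Function.Periodic x (n + 1) := fun i => by
    rw [← shift_iterate_apply x (n + 1) i, hx]
  funext i
  exact hper.map_mod_nat i

/-- The transfer operator on `[0, ∞]`-valued functions, free of summability side conditions. -/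
noncomputable def ennLop (φ : SSeq → ℝ) (g : SSeq → ℝ≥0∞) : SSeq → ℝ≥0∞ :=
  fun x => ∑' s : ℕ+, ENNReal.ofReal (exp (φ (consSeq s x))) * g (consSeq s x)

lemma tsum_fin_succ_pi {n : ℕ} (g : (Fin (n + 1) → ℕ+) → ℝ≥0∞) :
    ∑' w : Fin (n + 1) → ℕ+, g w = ∑' (w : Fin n → ℕ+) (s : ℕ+), g (Fin.cons s w) := by
  rw [← (Fin.consEquiv fun _ => ℕ+).tsum_eq, ENNReal.tsum_prod', ENNReal.tsum_comm]
  rfl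

lemma ennLop_iterate_apply (φ : SSeq → ℝ) (n : ℕ) (g : SSeq → ℝ≥0∞) (x : SSeq) :
    (ennLop φ)^[n] g x = ∑' w : Fin n → ℕ+,
      ENNReal.ofReal (exp (birkhoff φ n (prependWord w x))) * g (prependWord w x) := by
  induction n generalizing g with
  | zero => simp [birkhoff]
  | succ n ih =>
    rw [Function.iterate_succ_apply, ih, tsum_fin_succ_pi]
    refine tsum_congr fun w => ?_
    rw [ennLop, ← ENNReal.tsum_mul_left]
    refine tsum_congr fun s => ?_
    rw [← consSeq_prependWord, birkhoff_succ, shift_consSeq, add_comm, exp_add,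
      ENNReal.ofReal_mul (exp_pos _).le, mul_assoc]

/-- The partition function `Σ_{T^n y = x} e^{φ_n(y)} = (L_φ^n 1)(x)`. -/
noncomputable def preimageSum (φ : SSeq → ℝ) (n : ℕ) (x : SSeq) : ℝ≥0∞ :=
  ∑' w : Fin n → ℕ+, ENNReal.ofReal (exp (birkhoff φ n (prependWord w x)))

lemma ennLop_iterate_const (φ : SSeq → ℝ) (n : ℕ) (a : ℝ≥0∞) (x : SSeq) :
    (ennLop φ)^[n] (fun _ => a) x = preimageSum φ n x * a := by
  rw [ennLop_iterate_apply, preimageSum, ENNReal.tsum_mul_right]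

lemma preimageSum_pos (φ : SSeq → ℝ) (n : ℕ) (x : SSeq) : 0 < preimageSum φ n x :=
  (ENNReal.ofReal_pos.mpr (exp_pos _)).trans_le (ENNReal.le_tsum fun _ => 1)

lemma ennLop_mono (φ : SSeq → ℝ) : Monotone (ennLop φ) :=
  fun _ _ hgh _ => ENNReal.tsum_le_tsum fun _ => mul_le_mul_right (hgh _) _

lemma Lop_nonneg (φ : SSeq → ℝ) {f : SSeq → ℝ} (hf : ∀ y, 0 ≤ f y) (x : SSeq) :
    0 ≤ Lop φ f x :=
  tsum_nonneg fun _ => mul_nonneg (exp_pos _).le (hf _)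

lemma Lop_iterate_nonneg (φ : SSeq → ℝ) {f : SSeq → ℝ} (hf : ∀ y, 0 ≤ f y) (n : ℕ) (x : SSeq) :
    0 ≤ (Lop φ)^[n] f x := by
  induction n generalizing f with
  | zero => exact hf x
  | succ n ih => exact ih (Lop_nonneg φ hf)

lemma tsum_ofReal_exp_le_opNorm (φ : SSeq → ℝ) (x : SSeq) :
    ∑' s : ℕ+, ENNReal.ofReal (exp (φ (consSeq s x))) ≤ opNorm φ :=
  le_iSup (fun y => ∑' s : ℕ+, ENNReal.ofReal (exp (φ (consSeq s y)))) x

section FiniteNorm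

variable {φ : SSeq → ℝ} (hnorm : opNorm φ ≠ ⊤)
include hnorm

lemma summable_exp_consSeq (x : SSeq) : Summable fun s : ℕ+ => exp (φ (consSeq s x)) := by
  simpa [ENNReal.toReal_ofReal (exp_pos _).le] using ENNReal.summable_toReal
    ((tsum_ofReal_exp_le_opNorm φ x).trans_lt hnorm.lt_top).ne

lemma Lop_le {f : SSeq → ℝ} {K : ℝ} (hf0 : ∀ y, 0 ≤ f y) (hfK : ∀ y, f y ≤ K) (x : SSeq) :
    Lop φ f x ≤ (opNorm φ).toReal * K := by
  have hK : 0 ≤ K := (hf0 x).trans (hfK x)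
  have hsum_exp : ∑' s : ℕ+, exp (φ (consSeq s x)) ≤ (opNorm φ).toReal := by
    rw [← ENNReal.ofReal_le_iff_le_toReal hnorm, ENNReal.ofReal_tsum_of_nonneg
      (fun _ => (exp_pos _).le) (summable_exp_consSeq hnorm x)]
    exact tsum_ofReal_exp_le_opNorm φ x
  calc Lop φ f x ≤ ∑' s : ℕ+, exp (φ (consSeq s x)) * K :=
        Summable.tsum_le_tsum (fun _ => mul_le_mul_of_nonneg_left (hfK _) (exp_pos _).le)
          ((summable_exp_consSeq hnorm x).mul_right K |>.of_nonneg_of_le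
            (fun _ => mul_nonneg (exp_pos _).le (hf0 _))
            (fun _ => mul_le_mul_of_nonneg_left (hfK _) (exp_pos _).le))
          ((summable_exp_consSeq hnorm x).mul_right K)
    _ = (∑' s : ℕ+, exp (φ (consSeq s x))) * K := tsum_mul_right
    _ ≤ (opNorm φ).toReal * K := mul_le_mul_of_nonneg_right hsum_exp hK

lemma ofReal_Lop {f : SSeq → ℝ} {K : ℝ} (hf0 : ∀ y, 0 ≤ f y) (hfK : ∀ y, f y ≤ K) (x : SSeq) :
    ENNReal.ofReal (Lop φ f x) = ennLop φ (fun y => ENNReal.ofReal (f y)) x := by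
  have hterm_nonneg : ∀ s : ℕ+, 0 ≤ exp (φ (consSeq s x)) * f (consSeq s x) :=
    fun _ => mul_nonneg (exp_pos _).le (hf0 _)
  rw [Lop, ENNReal.ofReal_tsum_of_nonneg hterm_nonneg
    (((summable_exp_consSeq hnorm x).mul_right K).of_nonneg_of_le hterm_nonneg
      fun _ => mul_le_mul_of_nonneg_left (hfK _) (exp_pos _).le)]
  exact tsum_congr fun _ => ENNReal.ofReal_mul (exp_pos _).le

lemma ofReal_Lop_iterate {f : SSeq → ℝ} {K : ℝ} (hf0 : ∀ y, 0 ≤ f y) (hfK : ∀ y, f y ≤ K)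
    (n : ℕ) (x : SSeq) :
    ENNReal.ofReal ((Lop φ)^[n] f x) = (ennLop φ)^[n] (fun y => ENNReal.ofReal (f y)) x := by
  induction n generalizing f K with
  | zero => rfl
  | succ n ih =>
    rw [Function.iterate_succ_apply, Function.iterate_succ_apply,
      ih (Lop_nonneg φ hf0) (Lop_le hnorm hf0 hfK)]
    rw [funext (ofReal_Lop hnorm hf0 hfK)]

lemma ofReal_Lop_iterate_one (n : ℕ) (x : SSeq) :
    ENNReal.ofReal ((Lop φ)^[n] (fun _ => 1) x) = preimageSum φ n x := by
  rw [ofReal_Lop_iterate hnorm (fun _ => zero_le_one) (fun _ => le_rfl), ENNReal.ofReal_one,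
    ennLop_iterate_const, mul_one]

lemma Lop_iterate_bounds {f : SSeq → ℝ} {c C : ℝ} (hc : 0 ≤ c) (hf : ∀ y, c ≤ f y ∧ f y ≤ C)
    (n : ℕ) (x : SSeq) :
    c * (Lop φ)^[n] (fun _ => 1) x ≤ (Lop φ)^[n] f x ∧
      (Lop φ)^[n] f x ≤ C * (Lop φ)^[n] (fun _ => 1) x := by
  have hf0 : ∀ y, 0 ≤ f y := fun y => hc.trans (hf y).1
  have hC : 0 ≤ C := hc.trans ((hf x).1.trans (hf x).2)
  have hconst : ∀ a : ℝ, 0 ≤ a → ENNReal.ofReal (a * (Lop φ)^[n] (fun _ => 1) x) =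
      (ennLop φ)^[n] (fun _ => ENNReal.ofReal a) x := fun a ha => by
    rw [ENNReal.ofReal_mul ha, ofReal_Lop_iterate_one hnorm, ennLop_iterate_const, mul_comm]
  have hmono := (ennLop_mono φ).iterate n
  constructor
  · rw [← ENNReal.ofReal_le_ofReal_iff (Lop_iterate_nonneg φ hf0 n x), hconst c hc,
      ofReal_Lop_iterate hnorm hf0 fun y => (hf y).2]
    exact hmono (fun y => ENNReal.ofReal_le_ofReal (hf y).1) x
  · rw [← ENNReal.ofReal_le_ofReal_iff (mul_nonneg hC (Lop_iterate_nonneg φ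
      (fun _ => zero_le_one) n x)), hconst C hC, ofReal_Lop_iterate hnorm hf0 fun y => (hf y).2]
    exact hmono (fun y => ENNReal.ofReal_le_ofReal (hf y).2) x

end FiniteNorm

lemma Lop_iterate_one_pos {φ : SSeq → ℝ} (hnorm : opNorm φ ≠ ⊤) (n : ℕ) (x : SSeq) :
    0 < (Lop φ)^[n] (fun _ => 1) x :=
  ENNReal.ofReal_pos.mp <| (ofReal_Lop_iterate_one hnorm n x).symm ▸ preimageSum_pos φ n x

section PeriodicPoints

variable {φ : SSeq → ℝ} (hbdd : ∀ n : ℕ, 1 ≤ n → BddAbove (varSet φ n))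
  (hsum : Summable fun n : ℕ => Vn φ (n + 1))
include hbdd hsum

/-- A periodic point is determined by its first period, and it is `varSum`-close to the point
obtained by prepending that period to `x`. -/
lemma Zg_succ_le (n : ℕ) (x : SSeq) :
    Zg φ 1 (n + 1) ≤ ENNReal.ofReal (exp (varSum φ)) * preimageSum φ (n + 1) x := by
  let restrict : {y : SSeq // shift^[n + 1] y = y ∧ y 0 = 1} → Fin (n + 1) → ℕ+ :=
    fun p j => p.1 j
  have hinj : Function.Injective restrict := fun p q h => Subtype.ext <| by
    rw [← periodicSeq_restrict p.2.1, ← periodicSeq_restrict q.2.1]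
    exact congrArg periodicSeq h
  calc Zg φ 1 (n + 1)
      ≤ ∑' p, ENNReal.ofReal (exp (varSum φ)) *
          ENNReal.ofReal (exp (birkhoff φ (n + 1) (prependWord (restrict p) x))) := by
        refine ENNReal.tsum_le_tsum fun p => ?_
        rw [← ENNReal.ofReal_mul (exp_pos _).le, ← exp_add]
        refine ENNReal.ofReal_le_ofReal (exp_le_exp.mpr ?_)
        have := birkhoff_sub_le_varSum hbdd hsum (x := p.1) (y := prependWord (restrict p) x)
          fun i hi => (prependWord_of_lt (restrict p) x hi).symm
        linarith
    _ = ENNReal.ofReal (exp (varSum φ)) * ∑' p,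
          ENNReal.ofReal (exp (birkhoff φ (n + 1) (prependWord (restrict p) x))) :=
        ENNReal.tsum_mul_left
    _ ≤ ENNReal.ofReal (exp (varSum φ)) * preimageSum φ (n + 1) x :=
        mul_le_mul_right (ENNReal.tsum_comp_le_tsum_of_injective hinj _) _

/-- Each word `w` yields the periodic point `(1w)(1w)⋯`; its Birkhoff sum is compared with that of
`1wx` over the first period, and `φ(1wx)` with `φ(1x)`. -/
lemma le_Zg_succ (n : ℕ) (x : SSeq) :
    ENNReal.ofReal (exp (φ (consSeq 1 x) - 2 * varSum φ)) * preimageSum φ n x ≤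
      Zg φ 1 (n + 1) := by
  let per : (Fin n → ℕ+) → {y : SSeq // shift^[n + 1] y = y ∧ y 0 = 1} := fun w =>
    ⟨periodicSeq (Fin.cons 1 w), shift_iterate_periodicSeq _, periodicSeq_of_lt _ n.succ_pos⟩
  have hinj : Function.Injective per := fun w w' h =>
    Fin.cons_right_injective (α := fun _ => ℕ+) 1 (periodicSeq_injective (congrArg Subtype.val h))
  have hterm : ∀ w, φ (consSeq 1 x) - 2 * varSum φ + birkhoff φ n (prependWord w x) ≤
      birkhoff φ (n + 1) (per w).1 := by
    intro w
    have hhead := birkhoff_sub_le_varSum hbdd hsum (n := 1) (x := consSeq 1 x)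
      (y := consSeq 1 (prependWord w x)) fun i hi => by rw [show i = 0 by omega]; rfl
    have hperiod := birkhoff_sub_le_varSum hbdd hsum (x := prependWord (Fin.cons 1 w) x)
      (y := periodicSeq (Fin.cons 1 w)) fun i hi => by
        rw [prependWord_of_lt _ _ hi, periodicSeq_of_lt _ hi]
    rw [birkhoff_one, birkhoff_one] at hhead
    rw [← consSeq_prependWord, birkhoff_succ, shift_consSeq] at hperiod
    linarith
  calc ENNReal.ofReal (exp (φ (consSeq 1 x) - 2 * varSum φ)) * preimageSum φ n x
      = ∑' w, ENNReal.ofReal (exp (φ (consSeq 1 x) - 2 * varSum φ)) *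
          ENNReal.ofReal (exp (birkhoff φ n (prependWord w x))) := ENNReal.tsum_mul_left.symm
    _ ≤ ∑' w, ENNReal.ofReal (exp (birkhoff φ (n + 1) (per w).1)) :=
        ENNReal.tsum_le_tsum fun w => by
          rw [← ENNReal.ofReal_mul (exp_pos _).le, ← exp_add]
          exact ENNReal.ofReal_le_ofReal (exp_le_exp.mpr (hterm w))
    _ ≤ Zg φ 1 (n + 1) := ENNReal.tsum_comp_le_tsum_of_injective hinj
          fun p => ENNReal.ofReal (exp (birkhoff φ (n + 1) p.1))

lemma Zg_succ_toReal_bounds (hnorm : opNorm φ ≠ ⊤) (n : ℕ) (x : SSeq) :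
    exp (φ (consSeq 1 x) - 2 * varSum φ) * (Lop φ)^[n] (fun _ => 1) x ≤
        (Zg φ 1 (n + 1)).toReal ∧
      (Zg φ 1 (n + 1)).toReal ≤ exp (varSum φ) * (Lop φ)^[n + 1] (fun _ => 1) x := by
  have hupper : Zg φ 1 (n + 1) ≤
      ENNReal.ofReal (exp (varSum φ) * (Lop φ)^[n + 1] (fun _ => 1) x) := by
    rw [ENNReal.ofReal_mul (exp_pos _).le, ofReal_Lop_iterate_one hnorm]
    exact Zg_succ_le hbdd hsum n x
  constructor
  · rw [← ENNReal.ofReal_le_iff_le_toReal (ne_top_of_le_ne_top ENNReal.ofReal_ne_top hupper),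
      ENNReal.ofReal_mul (exp_pos _).le, ofReal_Lop_iterate_one hnorm]
    exact le_Zg_succ hbdd hsum n x
  · exact ENNReal.toReal_le_of_le_ofReal
      (mul_pos (exp_pos _) (Lop_iterate_one_pos hnorm _ x)).le hupper

end PeriodicPoints

lemma tendsto_inv_mul_succ {u : ℕ → ℝ} {P : ℝ}
    (hu : Tendsto (fun n : ℕ => (1 / (n : ℝ)) * u n) atTop (nhds P)) :
    Tendsto (fun n : ℕ => (1 / (n : ℝ)) * u (n + 1)) atTop (nhds P) := by
  have h := (hu.comp (tendsto_add_atTop_nat 1)).div (tendsto_natCast_div_add_atTop (1 : ℝ))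
    one_ne_zero
  rw [div_one] at h
  refine h.congr' ?_
  filter_upwards [eventually_gt_atTop 0] with n hn
  have hn' : (n : ℝ) ≠ 0 := by positivity
  simp only [Pi.div_apply, Function.comp_apply, Nat.cast_add, Nat.cast_one]
  field_simp

lemma tendsto_inv_mul_of_le_of_le {u v w : ℕ → ℝ} {P : ℝ} (a b : ℝ)
    (hu : Tendsto (fun n : ℕ => (1 / (n : ℝ)) * u n) atTop (nhds P))
    (hv : Tendsto (fun n : ℕ => (1 / (n : ℝ)) * v n) atTop (nhds P))
    (h : ∀ᶠ n in atTop, u n + a ≤ w n ∧ w n ≤ v n + b) :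
    Tendsto (fun n : ℕ => (1 / (n : ℝ)) * w n) atTop (nhds P) := by
  have hshift : ∀ {t : ℕ → ℝ} (d : ℝ),
      Tendsto (fun n : ℕ => (1 / (n : ℝ)) * t n) atTop (nhds P) →
      Tendsto (fun n : ℕ => (1 / (n : ℝ)) * (t n + d)) atTop (nhds P) := fun d ht => by
    simpa [mul_add] using ht.add (tendsto_one_div_atTop_nhds_zero_nat.mul_const d)
  refine tendsto_of_tendsto_of_tendsto_of_le_of_le' (hshift a hu) (hshift b hv) ?_ ?_ <;>
    filter_upwards [h] with n hn
  · exact mul_le_mul_of_nonneg_left hn.1 (by positivity)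
  · exact mul_le_mul_of_nonneg_left hn.2 (by positivity)

section Pressure

variable {φ : SSeq → ℝ} (hbdd : ∀ n : ℕ, 1 ≤ n → BddAbove (varSet φ n))
  (hsum : Summable fun n : ℕ => Vn φ (n + 1)) (hnorm : opNorm φ ≠ ⊤)
  {P : ℝ} (hP : IsGurevich φ P)
include hbdd hsum hnorm hP

theorem tendsto_log_Lop_iterate_one (x : SSeq) :
    Tendsto (fun n : ℕ => (1 / (n : ℝ)) * log ((Lop φ)^[n] (fun _ => 1) x)) atTop (nhds P) := by
  have hbounds := Zg_succ_toReal_bounds hbdd hsum hnorm (x := x)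
  have he := Lop_iterate_one_pos hnorm (x := x)
  refine tendsto_inv_mul_of_le_of_le (-varSum φ) (2 * varSum φ - φ (consSeq 1 x)) (hP 1)
    (tendsto_inv_mul_succ (hP 1)) ?_
  filter_upwards [eventually_ge_atTop 1] with n hn
  obtain ⟨m, rfl⟩ := Nat.exists_eq_add_of_le' hn
  have hz : 0 < (Zg φ 1 (m + 1)).toReal := (mul_pos (exp_pos _) (he m)).trans_le (hbounds m).1
  have hlow := log_le_log hz (hbounds m).2
  have hup := log_le_log (mul_pos (exp_pos _) (he _)) (hbounds (m + 1)).1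
  rw [log_mul (exp_pos _).ne' (he _).ne', log_exp] at hlow hup
  constructor <;> linarith

theorem tendsto_log_Lop_iterate {f : ℕ → SSeq → ℝ} {c C : ℝ} (hc : 0 < c) (hcC : c ≤ C)
    (hf : ∀ n : ℕ, 1 ≤ n → ∀ y : SSeq, c ≤ f n y ∧ f n y ≤ C) (x : SSeq) :
    Tendsto (fun n : ℕ => (1 / (n : ℝ)) * log ((Lop φ)^[n] (f n) x)) atTop (nhds P) := by
  have hone := tendsto_log_Lop_iterate_one hbdd hsum hnorm hP x
  refine tendsto_inv_mul_of_le_of_le (log c) (log C) hone hone ?_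
  filter_upwards [eventually_ge_atTop 1] with n hn
  obtain ⟨hlow, hup⟩ := Lop_iterate_bounds hnorm hc.le (hf n hn) n x
  have he := Lop_iterate_one_pos hnorm n x
  rw [add_comm, add_comm _ (log C), ← log_mul hc.ne' he.ne',
    ← log_mul (hc.trans_le hcC).ne' he.ne']
  exact ⟨log_le_log (mul_pos hc he) hlow, log_le_log ((mul_pos hc he).trans_le hlow) hup⟩

end Pressure

/-- If `φ` has summable variations and finite sup-norm for the transfer operator, and
`(f_n)` is uniformly bounded away from `0` and `∞`, then for every `x`,
`(1/n) log (L_φ^n f_n)(x) → P_G(φ)`; in particular with `f_n ≡ 1`. -/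
theorem gurevich_pressure_via_transfer_operator (φ : SSeq → ℝ)
    (hbdd : ∀ n : ℕ, 1 ≤ n → BddAbove (varSet φ n))
    (hsum : Summable fun n : ℕ => Vn φ (n + 1))
    (hnorm : opNorm φ ≠ ⊤)
    (P : ℝ) (hP : IsGurevich φ P)
    (f : ℕ → SSeq → ℝ) (c C : ℝ) (hc : 0 < c) (hcC : c ≤ C)
    (hf : ∀ n : ℕ, 1 ≤ n → ∀ y : SSeq, c ≤ f n y ∧ f n y ≤ C) :
    (∀ x : SSeq,
        Tendsto (fun n : ℕ => (1 / (n : ℝ)) * Real.log ((Lop φ)^[n] (f n) x))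
          atTop (nhds P)) ∧
      ∀ x : SSeq,
        Tendsto (fun n : ℕ => (1 / (n : ℝ)) * Real.log ((Lop φ)^[n] (fun _ => 1) x))
          atTop (nhds P) :=
  ⟨tendsto_log_Lop_iterate hbdd hsum hnorm hP hc hcC hf,
    tendsto_log_Lop_iterate_one hbdd hsum hnorm hP⟩
end

section
/- Suppose Σ_{n≥1} n|ρ(n)| < ∞ and fix β ≥ 0, h ∈ ℝ. Then for every p̄ ∈ Σ and every n ≥ 1: exp(−β² Σ_{k≥1} k|ρ(k)|) · 𝒵_n^{p̄}(β,h) ≤ Z̃_n(β,h) ≤ exp(β² Σ_{k≥1} k|ρ(k)|) · 𝒵_n^{p̄}(β,h). Consequently, for every p̄ ∈ Σ, the sequence (1/n) log 𝒵_n^{p̄}(β,h) converges to the annealed free energy F^a(β,h). -/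
open Real Filter Finset

/-- The potential `G(t) = Σ_{k≥0} ρ(t_0+⋯+t_k)`. -/
noncomputable def Gpot (ρ : ℕ → ℝ) (t : SSeq) : ℝ :=
  ∑' k : ℕ, ρ (∑ i ∈ Finset.range (k + 1), (t i : ℕ))

/-- The potential `φ_β = β²G + log K ∘ π_0`. -/
noncomputable def phiBeta (K ρ : ℕ → ℝ) (β : ℝ) (t : SSeq) : ℝ :=
  β ^ 2 * Gpot ρ t + Real.log (K (t 0))

/-- The modified annealed partition function, where the interaction also involves the
renewal point `τ_0 = 0`. -/
noncomputable def Ztilde (K ρ : ℕ → ℝ) (β h : ℝ) (n : ℕ) : ℝ :=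
  ∑ c : Composition n,
    Real.exp ((c.length : ℝ) * (h + β ^ 2 / 2)
        + β ^ 2 * ∑ i ∈ Finset.range (c.length + 1), ∑ j ∈ Finset.range (c.length + 1),
            if i < j then ρ (c.sizeUpTo j - c.sizeUpTo i) else 0)
      * ∏ i : Fin c.length, K (c.blocksFun i)

/-- The sequence `(l_{i+1}, l_i, …, l_1, p̄_0, p̄_1, …)` built from the first `i+1` blocks of
a composition (in reverse order) followed by the past `p̄`. -/
def pastSeq {n : ℕ} (c : Composition n) (p : SSeq) (i : Fin c.length) : SSeq := fun j =>
  if hj : j ≤ (i : ℕ) then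
    ⟨c.blocksFun ⟨(i : ℕ) - j, lt_of_le_of_lt (Nat.sub_le _ _) i.isLt⟩,
      c.blocks_pos (c.blocksFun_mem_blocks _)⟩
  else p (j - (i : ℕ) - 1)

/-- The annealed partition function with past `p̄`:
`𝒵_n^{p̄}(β,h) = Σ_k Σ_{l_1+⋯+l_k=n} ∏_i e^{h+β²/2+β²G(l_i⋯l_1 p̄)} K(l_i)`. -/
noncomputable def Zpast (K ρ : ℕ → ℝ) (β h : ℝ) (p : SSeq) (n : ℕ) : ℝ :=
  ∑ c : Composition n, ∏ i : Fin c.length,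
    Real.exp (h + β ^ 2 / 2 + β ^ 2 * Gpot ρ (pastSeq c p i)) * K (c.blocksFun i)

/-!
Write `τ_0 < τ_1 < ⋯` for the renewal points of a composition. The partial sums of
`l_{i+1} ⋯ l_1 p̄` are first `τ_{i+1} − τ_a` (`a ≤ i`) and then `τ_{i+1} + p̄_0 + ⋯ + p̄_m`, so
`G(l_{i+1} ⋯ l_1 p̄)` is the interaction of `τ_{i+1}` with all earlier renewal points plus a tail
in which `ρ` is evaluated at distinct arguments `> i + 1`. Summed over the blocks, the first parts
give exactly the exponent of `Z̃_n`, and the tails are bounded by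
`Σ_i Σ_{n > i} |ρ(n)| ≤ Σ_n n |ρ(n)|`. In the same way `Z̃_n` differs from `Z_n` only by the
interactions `Σ_j ρ(τ_j)` with `τ_0 = 0`, which are bounded by `Σ_n |ρ(n)|`. Hence `𝒵_n^{p̄}` and
`Z_n` agree up to a factor `e^{± 2β² Σ k|ρ(k)|}`, which is invisible in `(1/n) log`.
-/

section Series

lemma Summable.of_nonneg_of_succ_mul {f : ℕ → ℝ} (hf0 : ∀ n, 0 ≤ f n)
    (hf : Summable fun n : ℕ => ((n : ℝ) + 1) * f n) : Summable f :=
  hf.of_nonneg_of_le hf0 fun n =>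
    le_mul_of_one_le_left (hf0 n) (by linarith [n.cast_nonneg (α := ℝ)])

variable {ρ : ℕ → ℝ} {ι : Type*} {u : ι → ℕ}

lemma summable_abs_comp_and_tsum_le (hρ : Summable fun n : ℕ => |ρ (n + 1)|)
    (hu : Function.Injective u) {a : ℕ} (ha : ∀ i, a + 1 ≤ u i) :
    Summable (fun i => |ρ (u i)|) ∧ ∑' i, |ρ (u i)| ≤ ∑' n : ℕ, |ρ (n + a + 1)| := by
  have hshift : Summable fun n : ℕ => |ρ (n + a + 1)| := hρ.comp_injective (add_left_injective a)
  have hv : Function.Injective fun i => u i - (a + 1) := fun i j hij => by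
    have := ha i; have := ha j; exact hu (by simp only at hij; omega)
  have hcomp :
      (fun i => |ρ (u i)|) = (fun n : ℕ => |ρ (n + a + 1)|) ∘ fun i => u i - (a + 1) := by
    funext i; have := ha i; simp only [Function.comp_apply]; congr 3; omega
  rw [hcomp]
  exact ⟨hshift.comp_injective hv, tsum_comp_le_tsum_of_inj hshift (fun _ => abs_nonneg _) hv⟩

lemma abs_tsum_comp_le (hρ : Summable fun n : ℕ => |ρ (n + 1)|)
    (hu : Function.Injective u) {a : ℕ} (ha : ∀ i, a + 1 ≤ u i) :
    |∑' i, ρ (u i)| ≤ ∑' n : ℕ, |ρ (n + a + 1)| := by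
  obtain ⟨hsum, hle⟩ := summable_abs_comp_and_tsum_le hρ hu ha
  have := norm_tsum_le_tsum_norm (f := fun i => ρ (u i)) (by simpa only [Real.norm_eq_abs])
  simp only [Real.norm_eq_abs] at this
  exact this.trans hle

lemma sum_range_tsum_nat_add_le {f : ℕ → ℝ} (hf0 : ∀ n, 0 ≤ f n)
    (hf : Summable fun n : ℕ => ((n : ℝ) + 1) * f n) (k : ℕ) :
    ∑ i ∈ range k, ∑' n, f (n + i) ≤ ∑' n : ℕ, ((n : ℝ) + 1) * f n := by
  -- `∑' n, f (n + i)` is the sum of `f` over `n ≥ i`, and each `n` has at most `n + 1` such `i`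
  set g : ℕ → ℕ → ℝ := fun i n => if i ≤ n then f n else 0
  have hg : ∀ i, Summable (g i) := fun i =>
    (Summable.of_nonneg_of_succ_mul hf0 hf).of_nonneg_of_le
      (fun n => by simp only [g]; split_ifs <;> simp [hf0 n])
      fun n => by simp only [g]; split_ifs <;> simp [hf0 n]
  have htail : ∀ i, ∑' n, f (n + i) = ∑' n, g i n := fun i => by
    rw [← (hg i).sum_add_tsum_nat_add i,
      sum_eq_zero fun n hn => if_neg (by simp only [mem_range] at hn; omega), zero_add]
    exact tsum_congr fun n => (if_pos (Nat.le_add_left i n)).symm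
  have hcount : ∀ n, ∑ i ∈ range k, g i n ≤ ((n : ℝ) + 1) * f n := fun n => by
    rw [← sum_filter, sum_const, nsmul_eq_mul]
    have : #{i ∈ range k | i ≤ n} ≤ n + 1 :=
      (card_le_card fun i hi => by simp only [mem_filter, mem_range] at hi ⊢; omega).trans
        (card_range (n + 1)).le
    gcongr
    · exact hf0 n
    · exact_mod_cast this
  calc ∑ i ∈ range k, ∑' n, f (n + i) = ∑' n, ∑ i ∈ range k, g i n := by
        rw [Summable.tsum_finsetSum fun i _ => hg i]
        exact sum_congr rfl fun i _ => htail i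
    _ ≤ _ := Summable.tsum_le_tsum hcount (summable_sum fun i _ => hg i) hf

end Series

section DoubleSums

variable {M : Type*} [AddCommMonoid M] (F : ℕ → ℕ → M) (k : ℕ)

lemma sum_sum_ite_lt_eq_sum_sum_range :
    ∑ a ∈ range (k + 1), ∑ b ∈ range (k + 1), (if a < b then F a b else 0)
      = ∑ b ∈ range k, ∑ a ∈ range (b + 1), F a (b + 1) := by
  rw [sum_comm, sum_range_succ']
  simp only [Nat.not_lt_zero, if_false, sum_const_zero, add_zero]
  refine sum_congr rfl fun b hb => ?_
  rw [← sum_filter]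
  congr 1
  ext a
  simp only [mem_filter, mem_range] at hb ⊢
  omega

lemma sum_sum_ite_lt_eq_add :
    ∑ a ∈ range (k + 1), ∑ b ∈ range (k + 1), (if a < b then F a b else 0)
      = ∑ b ∈ range k, F 0 (b + 1)
        + ∑ a ∈ range k, ∑ b ∈ range k, (if a < b then F (a + 1) (b + 1) else 0) := by
  rw [sum_range_succ', add_comm]
  congr 1
  · simp [sum_range_succ']
  · refine sum_congr rfl fun a _ => ?_
    simp [sum_range_succ']

end DoubleSums

section PastSequence

lemma add_one_le_sum_range_succ (x : SSeq) (k : ℕ) : k + 1 ≤ ∑ j ∈ range (k + 1), (x j : ℕ) :=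
  calc k + 1 = ∑ j ∈ range (k + 1), 1 := by simp
    _ ≤ _ := sum_le_sum fun j _ => (x j).pos

lemma strictMono_sum_range_succ (x : SSeq) :
    StrictMono fun k => ∑ j ∈ range (k + 1), (x j : ℕ) :=
  strictMono_nat_of_lt_succ fun k => by
    rw [sum_range_succ _ (k + 1)]
    exact Nat.lt_add_of_pos_right (x (k + 1)).pos

variable {n : ℕ} (c : Composition n) (p : SSeq) (i : Fin c.length)

lemma sum_range_pastSeq_add_sizeUpTo {k : ℕ} (hk : k ≤ i) :
    ∑ j ∈ range (k + 1), (pastSeq c p i j : ℕ) + c.sizeUpTo (i - k) = c.sizeUpTo (i + 1) := by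
  induction k with
  | zero => simp [pastSeq, c.sizeUpTo_succ' i, add_comm]
  | succ k ih =>
    have hlt : (i : ℕ) - (k + 1) < c.length := by omega
    have hstep := c.sizeUpTo_succ' ⟨i - (k + 1), hlt⟩
    rw [show (i : ℕ) - (k + 1) + 1 = i - k by omega] at hstep
    rw [sum_range_succ, ← ih (by omega), hstep]
    simp only [pastSeq, hk, ↓reduceDIte, PNat.mk_coe]
    ring

lemma sum_range_pastSeq_add (m : ℕ) :
    ∑ j ∈ range (m + (i + 1) + 1), (pastSeq c p i j : ℕ)
      = c.sizeUpTo (i + 1) + ∑ r ∈ range (m + 1), (p r : ℕ) := by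
  have hblocks := sum_range_pastSeq_add_sizeUpTo c p i le_rfl
  rw [Nat.sub_self, c.sizeUpTo_zero, add_zero] at hblocks
  rw [show m + (i + 1) + 1 = (i + 1) + (m + 1) by omega, sum_range_add, hblocks]
  congr 1
  refine sum_congr rfl fun r _ => ?_
  simp [pastSeq, show ¬(i : ℕ) + 1 + r ≤ i by omega, show (i : ℕ) + 1 + r - i - 1 = r by omega]

end PastSequence

section Weights

variable {n : ℕ}

noncomputable def pastTail (ρ : ℕ → ℝ) (c : Composition n) (p : SSeq) (i : ℕ) : ℝ :=
  ∑' m : ℕ, ρ (c.sizeUpTo (i + 1) + ∑ r ∈ range (m + 1), (p r : ℕ))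

noncomputable def pastWeight (K ρ : ℕ → ℝ) (β h : ℝ) (p : SSeq) (c : Composition n) : ℝ :=
  ∏ i : Fin c.length,
    Real.exp (h + β ^ 2 / 2 + β ^ 2 * Gpot ρ (pastSeq c p i)) * K (c.blocksFun i)

noncomputable def ztildeWeight (K ρ : ℕ → ℝ) (β h : ℝ) (c : Composition n) : ℝ :=
  Real.exp ((c.length : ℝ) * (h + β ^ 2 / 2)
      + β ^ 2 * ∑ i ∈ range (c.length + 1), ∑ j ∈ range (c.length + 1),
          if i < j then ρ (c.sizeUpTo j - c.sizeUpTo i) else 0)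
    * ∏ i : Fin c.length, K (c.blocksFun i)

variable {K ρ : ℕ → ℝ} {β h : ℝ} (c : Composition n) (p : SSeq) (i : Fin c.length)

lemma pastTail_eq_tsum_pastSeq :
    pastTail ρ c p i = ∑' m, ρ (∑ j ∈ range (m + (i + 1) + 1), (pastSeq c p i j : ℕ)) :=
  tsum_congr fun m => by rw [sum_range_pastSeq_add]

lemma ztildeWeight_eq_exp_mul_annWeight :
    ztildeWeight K ρ β h c
      = Real.exp (β ^ 2 * ∑ j : Fin c.length, ρ (c.sizeUpTo (j + 1))) * annWeight K ρ β h c := by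
  rw [ztildeWeight, annWeight, ← mul_assoc, ← Real.exp_add]
  congr 2
  rw [sum_sum_ite_lt_eq_add (fun a b => ρ (c.sizeUpTo b - c.sizeUpTo a))]
  simp only [c.sizeUpTo_zero, Nat.sub_zero, Finset.sum_range]
  ring

variable (hρ : Summable fun n : ℕ => |ρ (n + 1)|)
include hρ

lemma abs_pastTail_le : |pastTail ρ c p i| ≤ ∑' n : ℕ, |ρ (n + i + 1)| := by
  rw [pastTail_eq_tsum_pastSeq]
  exact abs_tsum_comp_le hρ
    ((strictMono_sum_range_succ _).injective.comp (add_left_injective _))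
    fun m => (add_one_le_sum_range_succ (pastSeq c p i) (m + (i + 1))).trans' (by omega)

lemma Gpot_pastSeq :
    Gpot ρ (pastSeq c p i)
      = ∑ a ∈ range (i + 1), ρ (c.sizeUpTo (i + 1) - c.sizeUpTo a) + pastTail ρ c p i := by
  have hsum : Summable fun k => ρ (∑ j ∈ range (k + 1), (pastSeq c p i j : ℕ)) :=
    (summable_abs_comp_and_tsum_le hρ (strictMono_sum_range_succ _).injective
      (a := 0) fun k => (add_one_le_sum_range_succ _ k).trans' (by omega)).1.of_abs
  rw [Gpot, ← hsum.sum_add_tsum_nat_add (i + 1), pastTail_eq_tsum_pastSeq,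
    ← sum_range_reflect (fun a => ρ (c.sizeUpTo (i + 1) - c.sizeUpTo a))]
  congr 1
  refine sum_congr rfl fun k hk => ?_
  have hk : k ≤ i := by simp only [mem_range] at hk; omega
  rw [← sum_range_pastSeq_add_sizeUpTo c p i hk, show (i : ℕ) + 1 - 1 - k = i - k by omega,
    Nat.add_sub_cancel]

lemma sum_Gpot_pastSeq :
    ∑ i : Fin c.length, Gpot ρ (pastSeq c p i)
      = ∑ a ∈ range (c.length + 1), ∑ b ∈ range (c.length + 1),
          (if a < b then ρ (c.sizeUpTo b - c.sizeUpTo a) else 0)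
        + ∑ i : Fin c.length, pastTail ρ c p i := by
  simp only [Gpot_pastSeq c p _ hρ, sum_add_distrib]
  rw [sum_sum_ite_lt_eq_sum_sum_range (fun a b => ρ (c.sizeUpTo b - c.sizeUpTo a)),
    Finset.sum_range]

lemma pastWeight_eq_exp_mul_ztildeWeight :
    pastWeight K ρ β h p c
      = Real.exp (β ^ 2 * ∑ i : Fin c.length, pastTail ρ c p i) * ztildeWeight K ρ β h c := by
  rw [pastWeight, prod_mul_distrib, ← Real.exp_sum, ztildeWeight, ← mul_assoc, ← Real.exp_add]
  congr 2
  rw [sum_add_distrib, sum_const, card_univ, Fintype.card_fin, nsmul_eq_mul, ← mul_sum,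
    sum_Gpot_pastSeq c p hρ]
  ring

end Weights

section Bounds

variable {n : ℕ} {ρ : ℕ → ℝ} (hρ : Summable fun n : ℕ => ((n : ℝ) + 1) * |ρ (n + 1)|)
  (c : Composition n)
include hρ

lemma summable_abs_of_summable_succ_mul : Summable fun n : ℕ => |ρ (n + 1)| :=
  Summable.of_nonneg_of_succ_mul (fun _ => abs_nonneg _) hρ

lemma abs_sum_pastTail_le (p : SSeq) :
    |∑ i : Fin c.length, pastTail ρ c p i| ≤ ∑' n : ℕ, ((n : ℝ) + 1) * |ρ (n + 1)| :=
  calc |∑ i : Fin c.length, pastTail ρ c p i|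
      ≤ ∑ i : Fin c.length, ∑' n : ℕ, |ρ (n + i + 1)| :=
        (abs_sum_le_sum_abs _ _).trans <| sum_le_sum fun i _ =>
          abs_pastTail_le c p i (summable_abs_of_summable_succ_mul hρ)
    _ = ∑ i ∈ range c.length, ∑' n : ℕ, |ρ (n + i + 1)| := by rw [Finset.sum_range]
    _ ≤ _ := sum_range_tsum_nat_add_le (f := fun n => |ρ (n + 1)|) (fun _ => abs_nonneg _) hρ _

lemma abs_sum_rho_sizeUpTo_succ_le :
    |∑ j : Fin c.length, ρ (c.sizeUpTo (j + 1))| ≤ ∑' n : ℕ, ((n : ℝ) + 1) * |ρ (n + 1)| := by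
  have hρ' := summable_abs_of_summable_succ_mul hρ
  have hinj : Function.Injective fun j : Fin c.length => c.sizeUpTo (j + 1) :=
    fun j j' hjj' => Fin.succ_injective _ (c.boundary.injective (Fin.ext hjj'))
  have hpos : ∀ j : Fin c.length, 0 + 1 ≤ c.sizeUpTo (j + 1) := fun j => by
    have := c.sizeUpTo_strict_mono j.2; omega
  rw [← tsum_fintype (L := .unconditional _)]
  refine (abs_tsum_comp_le hρ' hinj hpos).trans (Summable.tsum_le_tsum (fun n => ?_) hρ' hρ)
  exact le_mul_of_one_le_left (abs_nonneg _) (by linarith [n.cast_nonneg (α := ℝ)])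

end Bounds

section Comparison

variable {ι : Type*} (s : Finset ι) {f d : ι → ℝ} {C : ℝ}
  (hf : ∀ i ∈ s, 0 ≤ f i) (hd : ∀ i ∈ s, |d i| ≤ C)
include hf hd

lemma exp_neg_mul_sum_exp_mul_le_sum :
    Real.exp (-C) * ∑ i ∈ s, Real.exp (d i) * f i ≤ ∑ i ∈ s, f i := by
  rw [mul_sum]
  refine sum_le_sum fun i hi => ?_
  rw [← mul_assoc, ← Real.exp_add]
  exact mul_le_of_le_one_left (hf i hi)
    (Real.exp_le_one_iff.mpr (by linarith [(abs_le.mp (hd i hi)).2]))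

lemma sum_le_exp_mul_sum_exp_mul :
    ∑ i ∈ s, f i ≤ Real.exp C * ∑ i ∈ s, Real.exp (d i) * f i := by
  rw [mul_sum]
  refine sum_le_sum fun i hi => ?_
  rw [← mul_assoc, ← Real.exp_add]
  exact le_mul_of_one_le_left (hf i hi) (Real.one_le_exp (by linarith [(abs_le.mp (hd i hi)).1]))

end Comparison

lemma tendsto_one_div_mul_log_of_exp_bounds {a b : ℕ → ℝ} {C F : ℝ} (ha : ∀ n, 0 < a n)
    (hlow : ∀ n, Real.exp (-C) * b n ≤ a n) (hup : ∀ n, a n ≤ Real.exp C * b n)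
    (hF : Tendsto (fun n : ℕ => (1 / (n : ℝ)) * Real.log (a n)) atTop (nhds F)) :
    Tendsto (fun n : ℕ => (1 / (n : ℝ)) * Real.log (b n)) atTop (nhds F) := by
  have hb : ∀ n, 0 < b n := fun n =>
    pos_of_mul_pos_right ((ha n).trans_le (hup n)) (Real.exp_pos C).le
  have hlog : ∀ {c x : ℝ}, 0 < x → Real.log (Real.exp c * x) = c + Real.log x := fun hx => by
    rw [Real.log_mul (Real.exp_pos _).ne' hx.ne', Real.log_exp]
  have hCn : Tendsto (fun n : ℕ => (1 / (n : ℝ)) * C) atTop (nhds 0) := by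
    simpa using tendsto_one_div_atTop_nhds_zero_nat.mul_const C
  have hlower : Tendsto (fun n : ℕ => (1 / (n : ℝ)) * Real.log (a n) - (1 / (n : ℝ)) * C)
      atTop (nhds F) := by simpa using hF.sub hCn
  have hupper : Tendsto (fun n : ℕ => (1 / (n : ℝ)) * Real.log (a n) + (1 / (n : ℝ)) * C)
      atTop (nhds F) := by simpa using hF.add hCn
  refine tendsto_of_tendsto_of_tendsto_of_le_of_le hlower hupper (fun n => ?_) (fun n => ?_)
  · have := Real.log_le_log (ha n) (hup n)
    rw [hlog (hb n)] at this
    rw [← mul_sub]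
    exact mul_le_mul_of_nonneg_left (by linarith) (by positivity)
  · have := Real.log_le_log (mul_pos (Real.exp_pos _) (hb n)) (hlow n)
    rw [hlog (hb n)] at this
    rw [← mul_add]
    exact mul_le_mul_of_nonneg_left (by linarith) (by positivity)

section PartitionFunctions

variable {K ρ : ℕ → ℝ} (hKpos : ∀ n : ℕ, 1 ≤ n → 0 < K n) (β h : ℝ)
include hKpos

lemma prod_blocksFun_pos {n : ℕ} (c : Composition n) :
    0 < ∏ i : Fin c.length, K (c.blocksFun i) :=
  prod_pos fun i _ => hKpos _ (c.one_le_blocksFun i)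

lemma Zann_pos (n : ℕ) : 0 < Zann K ρ β h n :=
  sum_pos (fun c _ => mul_pos (Real.exp_pos _) (prod_blocksFun_pos hKpos c)) univ_nonempty

variable (hρ : Summable fun n : ℕ => ((n : ℝ) + 1) * |ρ (n + 1)|)
include hρ

lemma exp_neg_mul_Zpast_le_Ztilde_and_le (p : SSeq) (n : ℕ) :
    Real.exp (-(β ^ 2 * ∑' k : ℕ, ((k : ℝ) + 1) * |ρ (k + 1)|)) * Zpast K ρ β h p n
        ≤ Ztilde K ρ β h n ∧
      Ztilde K ρ β h n
        ≤ Real.exp (β ^ 2 * ∑' k : ℕ, ((k : ℝ) + 1) * |ρ (k + 1)|) * Zpast K ρ β h p n := by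
  have hZ : Zpast K ρ β h p n = ∑ c : Composition n,
      Real.exp (β ^ 2 * ∑ i : Fin c.length, pastTail ρ c p i) * ztildeWeight K ρ β h c :=
    sum_congr rfl fun c _ =>
      pastWeight_eq_exp_mul_ztildeWeight c p (summable_abs_of_summable_succ_mul hρ)
  have hf : ∀ c ∈ (univ : Finset (Composition n)), 0 ≤ ztildeWeight K ρ β h c :=
    fun c _ => (mul_pos (Real.exp_pos _) (prod_blocksFun_pos hKpos c)).le
  have hd : ∀ c ∈ (univ : Finset (Composition n)),
      |β ^ 2 * ∑ i : Fin c.length, pastTail ρ c p i|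
        ≤ β ^ 2 * ∑' k : ℕ, ((k : ℝ) + 1) * |ρ (k + 1)| := fun c _ => by
    rw [abs_mul, abs_of_nonneg (sq_nonneg β)]
    exact mul_le_mul_of_nonneg_left (abs_sum_pastTail_le hρ c p) (sq_nonneg β)
  rw [hZ]
  exact ⟨exp_neg_mul_sum_exp_mul_le_sum _ hf hd, sum_le_exp_mul_sum_exp_mul _ hf hd⟩

lemma exp_neg_mul_Ztilde_le_Zann_and_le (n : ℕ) :
    Real.exp (-(β ^ 2 * ∑' k : ℕ, ((k : ℝ) + 1) * |ρ (k + 1)|)) * Ztilde K ρ β h n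
        ≤ Zann K ρ β h n ∧
      Zann K ρ β h n
        ≤ Real.exp (β ^ 2 * ∑' k : ℕ, ((k : ℝ) + 1) * |ρ (k + 1)|) * Ztilde K ρ β h n := by
  have hZ : Ztilde K ρ β h n = ∑ c : Composition n,
      Real.exp (β ^ 2 * ∑ j : Fin c.length, ρ (c.sizeUpTo (j + 1))) * annWeight K ρ β h c :=
    sum_congr rfl fun c _ => ztildeWeight_eq_exp_mul_annWeight c
  have hf : ∀ c ∈ (univ : Finset (Composition n)), 0 ≤ annWeight K ρ β h c :=
    fun c _ => (mul_pos (Real.exp_pos _) (prod_blocksFun_pos hKpos c)).le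
  have hd : ∀ c ∈ (univ : Finset (Composition n)),
      |β ^ 2 * ∑ j : Fin c.length, ρ (c.sizeUpTo (j + 1))|
        ≤ β ^ 2 * ∑' k : ℕ, ((k : ℝ) + 1) * |ρ (k + 1)| := fun c _ => by
    rw [abs_mul, abs_of_nonneg (sq_nonneg β)]
    exact mul_le_mul_of_nonneg_left (abs_sum_rho_sizeUpTo_succ_le hρ c) (sq_nonneg β)
  rw [hZ]
  exact ⟨exp_neg_mul_sum_exp_mul_le_sum _ hf hd, sum_le_exp_mul_sum_exp_mul _ hf hd⟩

end PartitionFunctions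

theorem partition_with_past_general (K ρ : ℕ → ℝ)
    (hKpos : ∀ n : ℕ, 1 ≤ n → 0 < K n)
    (hρ : Summable fun n : ℕ => ((n : ℝ) + 1) * |ρ (n + 1)|)
    (β h : ℝ)
    (Fa : ℝ)
    (hFa : Tendsto (fun n : ℕ => (1 / (n : ℝ)) * Real.log (Zann K ρ β h n))
      atTop (nhds Fa)) :
    (∀ p : SSeq, ∀ n : ℕ, 1 ≤ n →
        Real.exp (-(β ^ 2 * ∑' k : ℕ, ((k : ℝ) + 1) * |ρ (k + 1)|)) * Zpast K ρ β h p n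
            ≤ Ztilde K ρ β h n ∧
          Ztilde K ρ β h n
            ≤ Real.exp (β ^ 2 * ∑' k : ℕ, ((k : ℝ) + 1) * |ρ (k + 1)|) * Zpast K ρ β h p n) ∧
      ∀ p : SSeq,
        Tendsto (fun n : ℕ => (1 / (n : ℝ)) * Real.log (Zpast K ρ β h p n))
          atTop (nhds Fa) := by
  set C := β ^ 2 * ∑' k : ℕ, ((k : ℝ) + 1) * |ρ (k + 1)|
  have hpast := exp_neg_mul_Zpast_le_Ztilde_and_le hKpos β h hρ
  have hann := exp_neg_mul_Ztilde_le_Zann_and_le hKpos β h hρ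
  refine ⟨fun p n _ => hpast p n, fun p => ?_⟩
  refine tendsto_one_div_mul_log_of_exp_bounds (C := C + C) (Zann_pos hKpos β h)
    (fun n => ?_) (fun n => ?_) hFa
  · calc Real.exp (-(C + C)) * Zpast K ρ β h p n
        = Real.exp (-C) * (Real.exp (-C) * Zpast K ρ β h p n) := by
          rw [neg_add, Real.exp_add, mul_assoc]
      _ ≤ Real.exp (-C) * Ztilde K ρ β h n := by gcongr; exact (hpast p n).1
      _ ≤ Zann K ρ β h n := (hann n).1
  · calc Zann K ρ β h n ≤ Real.exp C * Ztilde K ρ β h n := (hann n).2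
      _ ≤ Real.exp C * (Real.exp C * Zpast K ρ β h p n) := by gcongr; exact (hpast p n).2
      _ = Real.exp (C + C) * Zpast K ρ β h p n := by rw [Real.exp_add, mul_assoc]

/-- Comparison of the modified partition function with the partition function with past, and
convergence of `(1/n) log 𝒵_n^{p̄}` to the annealed free energy. -/
theorem partition_with_past (K ρ : ℕ → ℝ)
    (hKpos : ∀ n : ℕ, 1 ≤ n → 0 < K n)
    (hKsum : HasSum (fun n : ℕ => K (n + 1)) 1)
    (hρ : Summable fun n : ℕ => ((n : ℝ) + 1) * |ρ (n + 1)|)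
    (β h : ℝ) (hβ : 0 ≤ β)
    (Fa : ℝ)
    (hFa : Tendsto (fun n : ℕ => (1 / (n : ℝ)) * Real.log (Zann K ρ β h n))
      atTop (nhds Fa)) :
    (∀ p : SSeq, ∀ n : ℕ, 1 ≤ n →
        Real.exp (-(β ^ 2 * ∑' k : ℕ, ((k : ℝ) + 1) * |ρ (k + 1)|)) * Zpast K ρ β h p n
            ≤ Ztilde K ρ β h n ∧
          Ztilde K ρ β h n
            ≤ Real.exp (β ^ 2 * ∑' k : ℕ, ((k : ℝ) + 1) * |ρ (k + 1)|) * Zpast K ρ β h p n) ∧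
      ∀ p : SSeq,
        Tendsto (fun n : ℕ => (1 / (n : ℝ)) * Real.log (Zpast K ρ β h p n))
          atTop (nhds Fa) :=
  partition_with_past_general K ρ hKpos hρ β h Fa hFa
end
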